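/- Let r_i denote the i-th smallest prime greater than 3. For every integer t ≥ 10, the product r₃·r₄·⋯·r_t is strictly greater than 580·1492·(12·(t+3)·2^(t-3) - 7). -/

import Mathlib

/-- `r i` is the `i`-th smallest prime greater than 3 (so `r 1 = 5`, `r 2 = 7`, ...). -/
noncomputable def r (i : ℕ) : ℕ := Nat.nth (fun q => Nat.Prime q ∧ 3 < q) (i - 1)

/-!
The bound at `t + 1` is at most four times the bound at `t`, while every `r i` exceeds 3,
so the inequality propagates by induction from `t = 10`, where it is a direct computation.
-/

lemma infinite_setOf_prime_and_three_lt : {q | Nat.Prime q ∧ 3 < q}.Infinite :=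
  (Nat.infinite_setOfPred_prime.sdiff (Set.finite_le_nat 3)).mono
    fun _ hq => ⟨hq.1, not_le.mp hq.2⟩

lemma three_lt_r (i : ℕ) : 3 < r i :=
  (Nat.nth_mem_of_infinite infinite_setOf_prime_and_three_lt (i - 1)).2

lemma r_eq_of_count {i q : ℕ} (hq : Nat.Prime q ∧ 3 < q)
    (hc : Nat.count (fun q => Nat.Prime q ∧ 3 < q) q = i - 1) : r i = q := by
  rw [r, ← hc, Nat.nth_count hq]

lemma prod_r_Icc_three_ten :
    ∏ i ∈ Finset.Icc 3 10, r i = 11 * 13 * 17 * 19 * 23 * 29 * 31 * 37 := by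
  have h3 : r 3 = 11 := r_eq_of_count (by norm_num) (by decide)
  have h4 : r 4 = 13 := r_eq_of_count (by norm_num) (by decide)
  have h5 : r 5 = 17 := r_eq_of_count (by norm_num) (by decide)
  have h6 : r 6 = 19 := r_eq_of_count (by norm_num) (by decide)
  have h7 : r 7 = 23 := r_eq_of_count (by norm_num) (by decide)
  have h8 : r 8 = 29 := r_eq_of_count (by norm_num) (by decide)
  have h9 : r 9 = 31 := r_eq_of_count (by norm_num) (by decide)
  have h10 : r 10 = 37 := r_eq_of_count (by norm_num) (by decide)
  rw [show Finset.Icc 3 10 = {3, 4, 5, 6, 7, 8, 9, 10} by decide]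
  simp [h3, h4, h5, h6, h7, h8, h9, h10]

lemma four_mul_prod_Icc_le_prod_Icc_succ {f : ℕ → ℕ} (hf : ∀ i, 4 ≤ f i) {a b : ℕ}
    (hab : a ≤ b + 1) :
    4 * ∏ i ∈ Finset.Icc a b, f i ≤ ∏ i ∈ Finset.Icc a (b + 1), f i := by
  rw [Finset.prod_Icc_succ_top hab, mul_comm]
  exact Nat.mul_le_mul_left _ (hf _)

lemma bound_succ_le_four_mul {t : ℕ} (ht : 3 ≤ t) :
    12 * ((t + 1 + 3) * 2 ^ (t + 1 - 3)) - 7 ≤ 4 * (12 * ((t + 3) * 2 ^ (t - 3)) - 7) := by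
  obtain ⟨n, rfl⟩ := Nat.exists_eq_add_of_le ht
  have hpow : 1 ≤ 2 ^ n := Nat.one_le_two_pow
  rw [show 3 + n + 1 - 3 = n + 1 by omega, show 3 + n - 3 = n by omega, pow_succ]
  have : 12 * ((3 + n + 1 + 3) * (2 ^ n * 2)) + 21 ≤ 4 * (12 * ((3 + n + 3) * 2 ^ n)) := by
    nlinarith
  omega

theorem stmt_10 (t : ℕ) (ht : 10 ≤ t) :
    580 * 1492 * (12 * ((t + 3) * 2 ^ (t - 3)) - 7) < ∏ i ∈ Finset.Icc 3 t, r i := by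
  induction t, ht using Nat.le_induction with
  | base => rw [prod_r_Icc_three_ten]; norm_num
  | succ t ht ih =>
    calc 580 * 1492 * (12 * ((t + 1 + 3) * 2 ^ (t + 1 - 3)) - 7)
        ≤ 580 * 1492 * (4 * (12 * ((t + 3) * 2 ^ (t - 3)) - 7)) :=
          Nat.mul_le_mul_left _ (bound_succ_le_four_mul (by omega))
      _ = 4 * (580 * 1492 * (12 * ((t + 3) * 2 ^ (t - 3)) - 7)) := by ring
      _ < 4 * ∏ i ∈ Finset.Icc 3 t, r i := Nat.mul_lt_mul_of_pos_left ih (by norm_num)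
      _ ≤ ∏ i ∈ Finset.Icc 3 (t + 1), r i :=
          four_mul_prod_Icc_le_prod_Icc_succ (f := r) three_lt_r (by omega)
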